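/- arXiv:math/0701608 — 5 statements merged into one kernel-verified Lean document; each statement's English description precedes it below -/
import Mathlib

section
/- Let φ₁(t) = ((α²-7α+12)/2)t² + (-α²+6α-8)t³ + ((α²-5α+6)/2)t⁴ for t ≤ 1 and φ₁(t) = t^α for t ≥ 1, where α ∈ (1,2). Then φ₁ is C² on ℝ and t ↦ φ₁'(t)/t is strictly decreasing on (0,∞). -/
open Set

private lemma polyA_hasDerivAt (a b c t : ℝ) :
    HasDerivAt (fun t : ℝ => a * t ^ 2 + b * t ^ 3 + c * t ^ 4)
      (2 * a * t + 3 * b * t ^ 2 + 4 * c * t ^ 3) t := by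
  have h := (((hasDerivAt_pow 2 t).const_mul a).add
    ((hasDerivAt_pow 3 t).const_mul b)).add ((hasDerivAt_pow 4 t).const_mul c)
  refine h.congr_deriv ?_
  push_cast; ring

private lemma polyB_hasDerivAt (a b c t : ℝ) :
    HasDerivAt (fun t : ℝ => a * t + b * t ^ 2 + c * t ^ 3)
      (a + 2 * b * t + 3 * c * t ^ 2) t := by
  have h := (((hasDerivAt_id t).const_mul a).add
    ((hasDerivAt_pow 2 t).const_mul b)).add ((hasDerivAt_pow 3 t).const_mul c)
  refine h.congr_deriv ?_
  push_cast; ring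

/-- the first derivative of φ₁ -/
private noncomputable def psi (α : ℝ) : ℝ → ℝ := fun t =>
  if t ≤ 1 then (α ^ 2 - 7 * α + 12) * t + 3 * (-α ^ 2 + 6 * α - 8) * t ^ 2 +
      2 * (α ^ 2 - 5 * α + 6) * t ^ 3
  else α * t ^ (α - 1)

/-- the second derivative of φ₁ -/
private noncomputable def chi (α : ℝ) : ℝ → ℝ := fun t =>
  if t ≤ 1 then (α ^ 2 - 7 * α + 12) + 6 * (-α ^ 2 + 6 * α - 8) * t +
      6 * (α ^ 2 - 5 * α + 6) * t ^ 2
  else α * (α - 1) * t ^ (α - 2)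

/-- the derivative of t ↦ ψ t / t -/
private noncomputable def dg (α : ℝ) : ℝ → ℝ := fun t =>
  if t ≤ 1 then 3 * (-α ^ 2 + 6 * α - 8) + 4 * (α ^ 2 - 5 * α + 6) * t
  else α * (α - 2) * t ^ (α - 3)

private lemma hasDerivAt_phi (α : ℝ) (φ₁ : ℝ → ℝ)
    (hφ₁ : ∀ t : ℝ, φ₁ t = if t ≤ 1 then
        ((α ^ 2 - 7 * α + 12) / 2) * t ^ 2 + (-α ^ 2 + 6 * α - 8) * t ^ 3 +
          ((α ^ 2 - 5 * α + 6) / 2) * t ^ 4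
      else t ^ α) (t : ℝ) : HasDerivAt φ₁ (psi α t) t := by
  unfold psi
  rcases lt_trichotomy t 1 with ht | ht | ht
  · rw [if_pos ht.le]
    have hev : φ₁ =ᶠ[nhds t] fun x => ((α ^ 2 - 7 * α + 12) / 2) * x ^ 2 +
        (-α ^ 2 + 6 * α - 8) * x ^ 3 + ((α ^ 2 - 5 * α + 6) / 2) * x ^ 4 := by
      filter_upwards [Iio_mem_nhds ht] with x hx
      rw [hφ₁ x, if_pos hx.le]
    have h := polyA_hasDerivAt ((α ^ 2 - 7 * α + 12) / 2) (-α ^ 2 + 6 * α - 8)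
      ((α ^ 2 - 5 * α + 6) / 2) t
    have h2 := h.congr_of_eventuallyEq hev
    refine h2.congr_deriv ?_
    ring
  · subst ht
    rw [if_pos le_rfl]
    have hL : HasDerivWithinAt φ₁ α (Iic 1) 1 := by
      have h := (polyA_hasDerivAt ((α ^ 2 - 7 * α + 12) / 2) (-α ^ 2 + 6 * α - 8)
        ((α ^ 2 - 5 * α + 6) / 2) 1).hasDerivWithinAt (s := Iic 1)
      have h2 : HasDerivWithinAt φ₁
          (2 * ((α ^ 2 - 7 * α + 12) / 2) * 1 + 3 * (-α ^ 2 + 6 * α - 8) * 1 ^ 2 +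
            4 * ((α ^ 2 - 5 * α + 6) / 2) * 1 ^ 3) (Iic 1) 1 :=
        h.congr (fun x hx => by rw [hφ₁ x, if_pos (mem_Iic.mp hx)])
          (by rw [hφ₁ 1, if_pos le_rfl])
      convert h2 using 1
      ring
    have hR : HasDerivWithinAt φ₁ α (Ici 1) 1 := by
      have h := (Real.hasDerivAt_rpow_const (x := 1) (p := α)
        (Or.inl one_ne_zero)).hasDerivWithinAt (s := Ici 1)
      have h2 : HasDerivWithinAt φ₁ (α * 1 ^ (α - 1)) (Ici 1) 1 :=
        h.congr (fun x hx => by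
          rcases eq_or_lt_of_le (mem_Ici.mp hx) with h1 | h1
          · rw [hφ₁ x, ← h1, if_pos le_rfl, Real.one_rpow]; ring
          · rw [hφ₁ x, if_neg (not_le.2 h1)])
          (by rw [hφ₁ 1, if_pos le_rfl, Real.one_rpow]; ring)
      convert h2 using 1
      rw [Real.one_rpow]; ring
    have h3 := hL.union hR
    rw [Iic_union_Ici] at h3
    have h4 := h3.hasDerivAt (by simp)
    refine h4.congr_deriv ?_
    ring
  · rw [if_neg (not_le.2 ht)]
    have hev : φ₁ =ᶠ[nhds t] fun x : ℝ => x ^ α := by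
      filter_upwards [Ioi_mem_nhds ht] with x hx
      rw [hφ₁ x, if_neg (not_le.2 hx)]
    exact (Real.hasDerivAt_rpow_const (Or.inl (by norm_num; linarith : t ≠ 0))).congr_of_eventuallyEq
      hev

private lemma rpow_deriv_piece (α t : ℝ) (ht : t ≠ 0) :
    HasDerivAt (fun x : ℝ => α * x ^ (α - 1)) (α * (α - 1) * t ^ (α - 2)) t := by
  have h := (Real.hasDerivAt_rpow_const (x := t) (p := α - 1) (Or.inl ht)).const_mul α
  refine h.congr_deriv ?_
  rw [show α - 1 - 1 = α - 2 by ring]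
  ring

private lemma hasDerivAt_psi (α : ℝ) (t : ℝ) : HasDerivAt (psi α) (chi α t) t := by
  unfold chi
  rcases lt_trichotomy t 1 with ht | ht | ht
  · rw [if_pos ht.le]
    have hev : psi α =ᶠ[nhds t] fun x => (α ^ 2 - 7 * α + 12) * x +
        3 * (-α ^ 2 + 6 * α - 8) * x ^ 2 + 2 * (α ^ 2 - 5 * α + 6) * x ^ 3 := by
      filter_upwards [Iio_mem_nhds ht] with x hx
      rw [psi, if_pos hx.le]
    have h := polyB_hasDerivAt (α ^ 2 - 7 * α + 12) (3 * (-α ^ 2 + 6 * α - 8))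
      (2 * (α ^ 2 - 5 * α + 6)) t
    have h2 := h.congr_of_eventuallyEq hev
    refine h2.congr_deriv ?_
    ring
  · subst ht
    rw [if_pos le_rfl]
    have hL : HasDerivWithinAt (psi α) (α * (α - 1)) (Iic 1) 1 := by
      have h := (polyB_hasDerivAt (α ^ 2 - 7 * α + 12) (3 * (-α ^ 2 + 6 * α - 8))
        (2 * (α ^ 2 - 5 * α + 6)) 1).hasDerivWithinAt (s := Iic 1)
      have h2 : HasDerivWithinAt (psi α)
          ((α ^ 2 - 7 * α + 12) + 2 * (3 * (-α ^ 2 + 6 * α - 8)) * 1 +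
            3 * (2 * (α ^ 2 - 5 * α + 6)) * 1 ^ 2) (Iic 1) 1 :=
        h.congr (fun x hx => by rw [psi, if_pos (mem_Iic.mp hx)])
          (by rw [psi, if_pos le_rfl])
      convert h2 using 1
      ring
    have hR : HasDerivWithinAt (psi α) (α * (α - 1)) (Ici 1) 1 := by
      have h := (rpow_deriv_piece α 1 one_ne_zero).hasDerivWithinAt (s := Ici 1)
      have h2 : HasDerivWithinAt (psi α) (α * (α - 1) * 1 ^ (α - 2)) (Ici 1) 1 :=
        h.congr (fun x hx => by
          rcases eq_or_lt_of_le (mem_Ici.mp hx) with h1 | h1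
          · rw [psi, ← h1, if_pos le_rfl, Real.one_rpow]; ring
          · rw [psi, if_neg (not_le.2 h1)])
          (by rw [psi, if_pos le_rfl, Real.one_rpow]; ring)
      convert h2 using 1
      rw [Real.one_rpow]; ring
    have h3 := hL.union hR
    rw [Iic_union_Ici] at h3
    have h4 := h3.hasDerivAt (by simp)
    refine h4.congr_deriv ?_
    ring
  · rw [if_neg (not_le.2 ht)]
    have hev : psi α =ᶠ[nhds t] fun x : ℝ => α * x ^ (α - 1) := by
      filter_upwards [Ioi_mem_nhds ht] with x hx
      rw [psi, if_neg (not_le.2 hx)]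
    exact (rpow_deriv_piece α t (by linarith)).congr_of_eventuallyEq hev

private lemma continuous_chi (α : ℝ) : Continuous (chi α) := by
  rw [continuous_iff_continuousAt]
  intro t
  have hpolyc : Continuous fun x : ℝ => (α ^ 2 - 7 * α + 12) + 6 * (-α ^ 2 + 6 * α - 8) * x +
      6 * (α ^ 2 - 5 * α + 6) * x ^ 2 := by continuity
  rcases lt_trichotomy t 1 with ht | ht | ht
  · have hev : (fun x => (α ^ 2 - 7 * α + 12) + 6 * (-α ^ 2 + 6 * α - 8) * x +
        6 * (α ^ 2 - 5 * α + 6) * x ^ 2) =ᶠ[nhds t] chi α := by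
      filter_upwards [Iio_mem_nhds ht] with x hx
      rw [chi, if_pos hx.le]
    exact hpolyc.continuousAt.congr hev
  · subst ht
    have hval : (α ^ 2 - 7 * α + 12) + 6 * (-α ^ 2 + 6 * α - 8) * 1 +
        6 * (α ^ 2 - 5 * α + 6) * 1 ^ 2 = α * (α - 1) * 1 ^ (α - 2) := by
      rw [Real.one_rpow]; ring
    have hL : ContinuousWithinAt (chi α) (Iic 1) 1 := by
      refine (hpolyc.continuousWithinAt (s := Iic 1) (x := 1)).congr
        (fun x hx => by rw [chi, if_pos (mem_Iic.mp hx)]) (by rw [chi, if_pos le_rfl])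
    have hR : ContinuousWithinAt (chi α) (Ici 1) 1 := by
      have hc : ContinuousAt (fun x : ℝ => α * (α - 1) * x ^ (α - 2)) 1 :=
        (Real.continuousAt_rpow_const 1 (α - 2) (Or.inl one_ne_zero)).const_mul _
      refine hc.continuousWithinAt.congr (fun x hx => ?_) ?_
      · rcases eq_or_lt_of_le (mem_Ici.mp hx) with h1 | h1
        · rw [chi, ← h1, if_pos le_rfl, ← hval]
        · rw [chi, if_neg (not_le.2 h1)]
      · rw [chi, if_pos le_rfl, ← hval]
    have := hL.union hR
    rwa [Iic_union_Ici, continuousWithinAt_univ] at this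
  · have hc : ContinuousAt (fun x : ℝ => α * (α - 1) * x ^ (α - 2)) t :=
      (Real.continuousAt_rpow_const t (α - 2) (Or.inl (by linarith))).const_mul _
    have hev : (fun x : ℝ => α * (α - 1) * x ^ (α - 2)) =ᶠ[nhds t] chi α := by
      filter_upwards [Ioi_mem_nhds ht] with x hx
      rw [chi, if_neg (not_le.2 hx)]
    exact hc.congr hev

private lemma hasDerivAt_g (α : ℝ) (t : ℝ) (ht : 0 < t) :
    HasDerivAt (fun t => psi α t / t) (dg α t) t := by
  have h := (hasDerivAt_psi α t).div (hasDerivAt_id t) ht.ne'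
  refine h.congr_deriv ?_
  rw [dg, psi, chi]
  simp only [id]
  rcases le_or_gt t 1 with h1 | h1
  · rw [if_pos h1, if_pos h1, if_pos h1]
    field_simp
    ring
  · rw [if_neg (not_le.2 h1), if_neg (not_le.2 h1), if_neg (not_le.2 h1)]
    have e1 : t ^ (α - 2) * t = t ^ (α - 1) := by
      rw [show α - 1 = (α - 2) + 1 by ring, Real.rpow_add_one ht.ne']
    have e2 : t ^ (α - 3) = t ^ (α - 1) / t ^ (2 : ℕ) := by
      rw [show α - 3 = (α - 1) - 2 by ring, Real.rpow_sub ht,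
        show (2:ℝ) = ((2:ℕ):ℝ) by norm_num, Real.rpow_natCast]
    rw [e2]
    field_simp
    rw [← e1]
    ring

private lemma dg_neg (α : ℝ) (hα1 : 1 < α) (hα2 : α < 2) (t : ℝ) (ht : 0 < t) :
    dg α t < 0 := by
  rw [dg]
  rcases le_or_gt t 1 with h1 | h1
  · rw [if_pos h1]
    nlinarith [mul_nonneg (mul_nonneg (by linarith : (0:ℝ) ≤ 2 - α)
      (by linarith : (0:ℝ) ≤ 3 - α)) (by linarith : (0:ℝ) ≤ 1 - t),
      mul_pos (by linarith : (0:ℝ) < α) (by linarith : (0:ℝ) < 2 - α)]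
  · rw [if_neg (not_le.2 h1)]
    have hpow : (0:ℝ) < t ^ (α - 3) := Real.rpow_pos_of_pos ht _
    have : α * (α - 2) < 0 := mul_neg_of_pos_of_neg (by linarith) (by linarith)
    nlinarith

/-- The explicit function φ₁ from the proof of Proposition 2.2 is C² on ℝ and
t ↦ φ₁'(t)/t is strictly decreasing on (0,∞). -/
theorem phi1_C2_and_strictAnti (α : ℝ) (hα1 : 1 < α) (hα2 : α < 2)
    (φ₁ : ℝ → ℝ)
    (hφ₁ : ∀ t : ℝ, φ₁ t = if t ≤ 1 then
        ((α ^ 2 - 7 * α + 12) / 2) * t ^ 2 + (-α ^ 2 + 6 * α - 8) * t ^ 3 +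
          ((α ^ 2 - 5 * α + 6) / 2) * t ^ 4
      else t ^ α) :
    ContDiff ℝ 2 φ₁ ∧ StrictAntiOn (fun t => deriv φ₁ t / t) (Ioi 0) := by
  have hD1 : ∀ t, HasDerivAt φ₁ (psi α t) t := hasDerivAt_phi α φ₁ hφ₁
  have hdiff1 : Differentiable ℝ φ₁ := fun t => (hD1 t).differentiableAt
  have hd1 : deriv φ₁ = psi α := funext fun t => (hD1 t).deriv
  have hdiff2 : Differentiable ℝ (psi α) := fun t => (hasDerivAt_psi α t).differentiableAt
  have hd2 : deriv (psi α) = chi α := funext fun t => (hasDerivAt_psi α t).deriv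
  constructor
  · rw [show (2 : WithTop ℕ∞) = 1 + 1 from rfl, contDiff_succ_iff_deriv]
    refine ⟨hdiff1, by simp, ?_⟩
    rw [hd1, contDiff_one_iff_deriv, hd2]
    exact ⟨hdiff2, continuous_chi α⟩
  · have hfun : (fun t => deriv φ₁ t / t) = fun t => psi α t / t := by
      rw [hd1]
    rw [hfun]
    refine strictAntiOn_of_deriv_neg (convex_Ioi 0)
      (fun t ht => ((hasDerivAt_g α t ht).continuousAt).continuousWithinAt) ?_
    intro t ht
    rw [interior_Ioi] at ht
    rw [(hasDerivAt_g α t ht).deriv]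
    exact dg_neg α hα1 hα2 t ht
end

section
/- Let u ∈ L²([0,1], ℝ^{2n}) with ∫₀¹ u(t) dt = 0, with Fourier expansion u(t) = Σ_{k≠0} e^{2πkJt} x_k where J is the standard symplectic matrix. Let Mu be the primitive of u with mean zero, i.e., (d/dt)Mu = u and ∫₀¹ Mu dt = 0. Then ⟨Ju, Mu⟩ = −Σ_{k≠0} (1/(2πk)) |x_k|², and in particular (1/2)⟨Ju, Mu⟩ ≥ −(1/(4π))‖u‖², where ⟨·,·⟩ and ‖·‖ are the L² inner product and norm. -/
open Real intervalIntegral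

open Complex MeasureTheory


noncomputable def ee (k : ℤ) (t : ℝ) : ℂ :=
  Complex.exp (((2 * π * (k : ℝ) * t : ℝ) : ℂ) * Complex.I)

lemma ee_norm (k : ℤ) (t : ℝ) : ‖ee k t‖ = 1 := by
  simp only [ee]
  exact Complex.norm_exp_ofReal_mul_I _

lemma ee_continuous (k : ℤ) : Continuous (ee k) := by
  unfold ee; fun_prop

lemma ee_mul_conj (k l : ℤ) (t : ℝ) :
    ee k t * (starRingEnd ℂ) (ee l t)
      = Complex.exp ((((k - l : ℤ) : ℂ) * (2 * π * Complex.I)) * t) := by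
  rw [ee, ee, ← Complex.exp_conj, ← Complex.exp_add]
  congr 1
  simp only [map_mul, Complex.conj_ofReal, Complex.conj_I]
  push_cast
  ring

lemma integral_ee_mul_conj (k l : ℤ) :
    (∫ t in (0:ℝ)..1, ee k t * (starRingEnd ℂ) (ee l t)) = if k = l then 1 else 0 := by
  simp only [ee_mul_conj]
  rcases eq_or_ne k l with h | h
  · simp [h]
  · rw [if_neg h, integral_exp_mul_complex]
    · rw [Complex.ofReal_one, Complex.ofReal_zero, mul_one, mul_zero, Complex.exp_zero,
        Complex.exp_int_mul_two_pi_mul_I, sub_self, zero_div]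
    · refine mul_ne_zero ?_ (by simp [Real.pi_ne_zero, Complex.I_ne_zero])
      exact_mod_cast sub_ne_zero.mpr h

lemma key {n : ℕ} (x : ℤ → EuclideanSpace ℂ (Fin n)) (hx1 : Summable fun k => ‖x k‖)
    (a b : ℤ → ℂ) (ha : ∀ k, ‖a k‖ ≤ 1) (hb : ∀ k, ‖b k‖ ≤ 1)
    (v w : ℝ → EuclideanSpace ℂ (Fin n))
    (hv : ∀ t, HasSum (fun k => (a k * ee k t) • x k) (v t))
    (hw : ∀ t, HasSum (fun k => (b k * ee k t) • x k) (w t)) :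
    HasSum (fun k => ((starRingEnd ℂ) (a k) * b k).re * ‖x k‖ ^ 2)
      (∫ t in (0:ℝ)..1, (inner ℂ (v t) (w t) : ℂ).re) := by
  set C := ∑' k, ‖x k‖ with hC
  -- norm bounds on terms
  have hterm : ∀ (c : ℤ → ℂ), (∀ k, ‖c k‖ ≤ 1) → ∀ k t, ‖(c k * ee k t) • x k‖ ≤ ‖x k‖ := by
    intro c hc k t
    rw [norm_smul, norm_mul, ee_norm, mul_one]
    exact mul_le_of_le_one_left (norm_nonneg _) (hc k)
  have hwB : ∀ t, ‖w t‖ ≤ C := by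
    intro t
    rw [← (hw t).tsum_eq]
    exact tsum_of_norm_bounded hx1.hasSum (hterm b hb · t)
  -- continuity
  have hcont : ∀ (c : ℤ → ℂ) (f : ℝ → EuclideanSpace ℂ (Fin n)),
      (∀ t, HasSum (fun k => (c k * ee k t) • x k) (f t)) → (∀ k, ‖c k‖ ≤ 1) → Continuous f := by
    intro c f hf hc
    have : f = fun t => ∑' k, (c k * ee k t) • x k := funext fun t => ((hf t).tsum_eq).symm
    rw [this]
    exact continuous_tsum
      (fun k => ((continuous_const.mul (ee_continuous k)).smul continuous_const)) hx1
      (fun k t => hterm c hc k t)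
  have hvc : Continuous v := hcont a v hv ha
  have hwc : Continuous w := hcont b w hw hb
  -- pointwise expansion in k
  have hFk : ∀ t, HasSum (fun k => ((a k * ee k t) * (inner ℂ (w t) (x k) : ℂ)).re)
      ((inner ℂ (v t) (w t) : ℂ).re) := by
    intro t
    have h1 : HasSum (fun k => (inner ℂ (w t) ((a k * ee k t) • x k) : ℂ)) (inner ℂ (w t) (v t)) :=
      (innerSL ℂ (w t)).hasSum (hv t)
    simp only [inner_smul_right] at h1
    have h2 := h1.mapL Complex.reCLM
    simp only [Complex.reCLM_apply] at h2
    have h3 : (inner ℂ (w t) (v t) : ℂ).re = (inner ℂ (v t) (w t) : ℂ).re := by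
      rw [← inner_conj_symm (v t) (w t), Complex.conj_re]
    rw [h3] at h2
    exact h2
  -- the per-k integral
  have hInt : ∀ k, (∫ t in (0:ℝ)..1, ((a k * ee k t) * (inner ℂ (w t) (x k) : ℂ)).re)
      = ((starRingEnd ℂ) (a k) * b k).re * ‖x k‖ ^ 2 := by
    intro k
    -- expansion in l, complex valued
    have hH : ∀ t, HasSum
        (fun l => (a k * (starRingEnd ℂ) (b l) * (starRingEnd ℂ) (inner ℂ (x k) (x l) : ℂ)) *
          (ee k t * (starRingEnd ℂ) (ee l t)))
        ((a k * ee k t) * (inner ℂ (w t) (x k) : ℂ)) := by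
      intro t
      have h1 : HasSum (fun l => (inner ℂ (x k) ((b l * ee l t) • x l) : ℂ))
          (inner ℂ (x k) (w t)) := (innerSL ℂ (x k)).hasSum (hw t)
      have h2 := (h1.star).mul_left (a k * ee k t)
      have h3 : (starRingEnd ℂ) (inner ℂ (x k) (w t) : ℂ) = (inner ℂ (w t) (x k) : ℂ) :=
        inner_conj_symm _ _
      simp only [inner_smul_right, starRingEnd_apply] at h2 ⊢
      convert h2 using 2 with l
      · rfl
      · simp only [star_mul', ← starRingEnd_apply, map_mul]
        ring
      · rw [← starRingEnd_apply, h3]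
    -- integrability of each term and of the limit
    have hHint : ∀ l : ℤ, IntervalIntegrable
        (fun t => (a k * (starRingEnd ℂ) (b l) * (starRingEnd ℂ) (inner ℂ (x k) (x l) : ℂ)) *
          (ee k t * (starRingEnd ℂ) (ee l t))) volume 0 1 := by
      intro l
      exact (continuous_const.mul
        ((ee_continuous k).mul ((ee_continuous l).star))).intervalIntegrable 0 1
    have hHi : IntervalIntegrable (fun t => (a k * ee k t) * (inner ℂ (w t) (x k) : ℂ))
        volume 0 1 :=
      ((continuous_const.mul (ee_continuous k)).mul
        (hwc.inner continuous_const)).intervalIntegrable 0 1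
    have hDom : HasSum
        (fun l => ∫ t in (0:ℝ)..1,
          (a k * (starRingEnd ℂ) (b l) * (starRingEnd ℂ) (inner ℂ (x k) (x l) : ℂ)) *
            (ee k t * (starRingEnd ℂ) (ee l t)))
        (∫ t in (0:ℝ)..1, (a k * ee k t) * (inner ℂ (w t) (x k) : ℂ)) := by
      apply intervalIntegral.hasSum_integral_of_dominated_convergence
        (bound := fun l (_ : ℝ) => ‖x k‖ * ‖x l‖)
      · intro l
        exact (continuous_const.mul
          ((ee_continuous k).mul ((ee_continuous l).star))).aestronglyMeasurable
      · intro l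
        filter_upwards with t ht
        have hin : ‖(inner ℂ (x k) (x l) : ℂ)‖ ≤ ‖x k‖ * ‖x l‖ := norm_inner_le_norm _ _
        simp only [norm_mul, starRingEnd_apply, norm_star, ee_norm, mul_one]
        calc ‖a k‖ * ‖b l‖ * ‖(inner ℂ (x k) (x l) : ℂ)‖
            ≤ 1 * 1 * (‖x k‖ * ‖x l‖) := by
              gcongr
              · exact ha k
              · exact hb l
          _ = ‖x k‖ * ‖x l‖ := by ring
      · filter_upwards with t ht
        exact hx1.mul_left ‖x k‖
      · exact intervalIntegrable_const
      · filter_upwards with t ht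
        exact hH t
    have hIl : ∀ l, (∫ t in (0:ℝ)..1,
        (a k * (starRingEnd ℂ) (b l) * (starRingEnd ℂ) (inner ℂ (x k) (x l) : ℂ)) *
          (ee k t * (starRingEnd ℂ) (ee l t)))
        = if l = k then a k * (starRingEnd ℂ) (b k) *
            (starRingEnd ℂ) (inner ℂ (x k) (x k) : ℂ) else 0 := by
      intro l
      rw [intervalIntegral.integral_const_mul, integral_ee_mul_conj]
      rcases eq_or_ne k l with h | h
      · subst h; simp
      · simp [h, Ne.symm h]
    rw [funext hIl] at hDom
    have hEq : (∫ t in (0:ℝ)..1, (a k * ee k t) * (inner ℂ (w t) (x k) : ℂ))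
        = a k * (starRingEnd ℂ) (b k) * (starRingEnd ℂ) (inner ℂ (x k) (x k) : ℂ) :=
      hDom.unique (hasSum_ite_eq k _)
    have hre := Complex.reCLM.intervalIntegral_comp_comm hHi
    simp only [Complex.reCLM_apply] at hre
    have hxx : (inner ℂ (x k) (x k) : ℂ) = ((‖x k‖ ^ 2 : ℝ) : ℂ) := by
      rw [inner_self_eq_norm_sq_to_K]; norm_cast
    have h5 : (a k * (starRingEnd ℂ) (b k)).re = ((starRingEnd ℂ) (a k) * b k).re := by
      rw [← Complex.conj_re (a k * (starRingEnd ℂ) (b k)), map_mul, Complex.conj_conj]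
    rw [hre, hEq, hxx, Complex.conj_ofReal,
      mul_comm (a k * (starRingEnd ℂ) (b k)) ((‖x k‖ ^ 2 : ℝ) : ℂ),
      Complex.re_ofReal_mul, h5, mul_comm]
  -- outer sum/integral exchange
  have hMain : HasSum (fun k => ∫ t in (0:ℝ)..1, ((a k * ee k t) * (inner ℂ (w t) (x k) : ℂ)).re)
      (∫ t in (0:ℝ)..1, (inner ℂ (v t) (w t) : ℂ).re) := by
    apply intervalIntegral.hasSum_integral_of_dominated_convergence
      (bound := fun k (_ : ℝ) => C * ‖x k‖)
    · intro k
      exact (Complex.continuous_re.comp ((continuous_const.mul (ee_continuous k)).mul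
        (hwc.inner continuous_const))).aestronglyMeasurable
    · intro k
      filter_upwards with t ht
      have h1 : ‖((a k * ee k t) * (inner ℂ (w t) (x k) : ℂ)).re‖
          ≤ ‖(a k * ee k t) * (inner ℂ (w t) (x k) : ℂ)‖ := by
        rw [Real.norm_eq_abs]
        exact Complex.abs_re_le_norm _
      refine h1.trans ?_
      rw [norm_mul, norm_mul, ee_norm, mul_one]
      have hin : ‖(inner ℂ (w t) (x k) : ℂ)‖ ≤ ‖w t‖ * ‖x k‖ := norm_inner_le_norm _ _
      calc ‖a k‖ * ‖(inner ℂ (w t) (x k) : ℂ)‖ ≤ 1 * (‖w t‖ * ‖x k‖) := by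
            gcongr; exact ha k
        _ ≤ C * ‖x k‖ := by
            rw [one_mul]
            exact mul_le_mul_of_nonneg_right (hwB t) (norm_nonneg _)
    · filter_upwards with t ht
      exact hx1.mul_left C
    · exact intervalIntegrable_const
    · filter_upwards with t ht
      exact hFk t
  rw [funext hInt] at hMain
  exact hMain

/-- (2.12)-(2.14): for a mean-zero loop u with Fourier expansion
u(t) = Σ_{k≠0} e^{2πkJt} x_k (here ℝ^{2n} is identified with ℂⁿ and J with
multiplication by i), and Mu its mean-zero primitive, one has
⟨Ju, Mu⟩ = -Σ_{k≠0} (1/(2πk))|x_k|², hence (1/2)⟨Ju, Mu⟩ ≥ -(1/(4π))‖u‖². -/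
theorem loop_inner_Ju_Mu (n : ℕ) (x : ℤ → EuclideanSpace ℂ (Fin n))
    (hx0 : x 0 = 0) (hx2 : Summable fun k : ℤ => ‖x k‖ ^ 2)
    (u Mu : ℝ → EuclideanSpace ℂ (Fin n))
    (hu : ∀ t : ℝ, HasSum
      (fun k : ℤ => Complex.exp (((2 * π * (k : ℝ) * t : ℝ) : ℂ) * Complex.I) • x k)
      (u t))
    (hMu : ∀ t : ℝ, HasSum
      (fun k : ℤ => (((2 * π * (k : ℝ) : ℝ) : ℂ) * Complex.I)⁻¹ •
        Complex.exp (((2 * π * (k : ℝ) * t : ℝ) : ℂ) * Complex.I) • x k)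
      (Mu t)) :
    (∫ t in (0:ℝ)..1, (inner ℂ (Complex.I • u t) (Mu t) : ℂ).re)
        = -∑' k : ℤ, (1 / (2 * π * (k : ℝ))) * ‖x k‖ ^ 2 ∧
      (1 / 2) * (∫ t in (0:ℝ)..1, (inner ℂ (Complex.I • u t) (Mu t) : ℂ).re)
        ≥ -(1 / (4 * π)) * ∫ t in (0:ℝ)..1, ‖u t‖ ^ 2 := by
  have hx1 : Summable fun k => ‖x k‖ := by
    have h := hu 0
    simp only [mul_zero, Complex.ofReal_zero, zero_mul, Complex.exp_zero, one_smul] at h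
    exact summable_norm_iff.mpr h.summable
  set cc : ℤ → ℂ := fun k => (((2 * π * (k : ℝ) : ℝ) : ℂ) * Complex.I)⁻¹ with hcc
  have hcb : ∀ k, ‖cc k‖ ≤ 1 := by
    intro k
    rcases eq_or_ne k 0 with h | h
    · simp [hcc, h]
    · rw [hcc]
      simp only [norm_inv, norm_mul, Complex.norm_I, mul_one, Complex.norm_real,
        Real.norm_eq_abs]
      have hk : (1 : ℝ) ≤ |(k : ℝ)| := by
        rw [← Int.cast_abs]
        exact_mod_cast Int.one_le_abs h
      have h1 : (1 : ℝ) ≤ |2| * |π| * |(k : ℝ)| := by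
        rw [abs_of_pos (by norm_num : (0:ℝ) < 2), abs_of_pos Real.pi_pos]
        nlinarith [Real.pi_gt_three]
      exact inv_le_one_of_one_le₀ h1
  have hv : ∀ t, HasSum (fun k => ((Complex.I : ℂ) * ee k t) • x k) (Complex.I • u t) := by
    intro t
    have := (hu t).const_smul Complex.I
    simpa [ee, smul_smul] using this
  have hw : ∀ t, HasSum (fun k => (cc k * ee k t) • x k) (Mu t) := by
    intro t
    have := hMu t
    simpa [ee, smul_smul, hcc] using this
  have hKey1 := key x hx1 (fun _ => Complex.I) cc (fun _ => by simp) hcb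
    (fun t => Complex.I • u t) Mu hv hw
  beta_reduce at hKey1
  have hco : ∀ k : ℤ, ((starRingEnd ℂ) Complex.I * cc k).re * ‖x k‖ ^ 2
      = -((1 / (2 * π * (k : ℝ))) * ‖x k‖ ^ 2) := by
    intro k
    have h1 : (starRingEnd ℂ) Complex.I * cc k = ((-(1 / (2 * π * (k : ℝ))) : ℝ) : ℂ) := by
      simp only [hcc, Complex.conj_I]
      rw [mul_inv, Complex.inv_I]
      rw [show ((-(1 / (2 * π * (k : ℝ))) : ℝ) : ℂ)
            = -(((2 * π * (k : ℝ) : ℝ) : ℂ))⁻¹ by push_cast; ring]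
      linear_combination (((2 * π * (k : ℝ) : ℝ) : ℂ))⁻¹ * Complex.I_mul_I
    rw [h1, Complex.ofReal_re]
    ring
  rw [funext hco] at hKey1
  have hv2 : ∀ t, HasSum (fun k => ((1 : ℂ) * ee k t) • x k) (u t) := by
    intro t
    simpa [ee, one_mul] using hu t
  have hKey2 := key x hx1 (fun _ => 1) (fun _ => 1) (fun _ => by simp) (fun _ => by simp)
    u u hv2 hv2
  simp only [map_one, one_mul, Complex.one_re] at hKey2
  have hP : (∫ t in (0:ℝ)..1, (inner ℂ (u t) (u t) : ℂ).re) = ∫ t in (0:ℝ)..1, ‖u t‖ ^ 2 := by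
    apply intervalIntegral.integral_congr
    intro t _
    show (inner ℂ (u t) (u t) : ℂ).re = ‖u t‖ ^ 2
    have : (inner ℂ (u t) (u t) : ℂ) = ((‖u t‖ ^ 2 : ℝ) : ℂ) := by
      rw [inner_self_eq_norm_sq_to_K]; norm_cast
    rw [this, Complex.ofReal_re]
  rw [hP] at hKey2
  constructor
  · rw [← hKey1.tsum_eq, tsum_neg]
  · have hfs : Summable fun k : ℤ => (1 / (2 * π * (k : ℝ))) * ‖x k‖ ^ 2 := by
      have := hKey1.summable
      simpa using this.neg
    have hle : (∑' k : ℤ, (1 / (2 * π * (k : ℝ))) * ‖x k‖ ^ 2)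
        ≤ ∑' k : ℤ, (1 / (2 * π)) * ‖x k‖ ^ 2 := by
      refine Summable.tsum_le_tsum (fun k => ?_) hfs (hx2.mul_left _)
      refine mul_le_mul_of_nonneg_right ?_ (by positivity)
      rcases le_or_gt ((k : ℝ)) 0 with h | h
      · have : 2 * π * (k : ℝ) ≤ 0 := by nlinarith [Real.pi_pos]
        have h2 : 1 / (2 * π * (k : ℝ)) ≤ 0 := div_nonpos_of_nonneg_of_nonpos zero_le_one this
        have h3 : 0 ≤ 1 / (2 * π) := by positivity
        linarith
      · have hk1 : (1 : ℝ) ≤ (k : ℝ) := by exact_mod_cast (by exact_mod_cast h : (0:ℤ) < k)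
        apply one_div_le_one_div_of_le (by positivity)
        nlinarith [Real.pi_pos]
    have htsum : (∑' k : ℤ, (1 / (2 * π)) * ‖x k‖ ^ 2)
        = (1 / (2 * π)) * ∫ t in (0:ℝ)..1, ‖u t‖ ^ 2 := by
      rw [tsum_mul_left, hKey2.tsum_eq]
    rw [← hKey1.tsum_eq, tsum_neg]
    have hPnn : 0 ≤ ∫ t in (0:ℝ)..1, ‖u t‖ ^ 2 := by
      rw [← hKey2.tsum_eq]
      exact tsum_nonneg fun k => by positivity
    set P := ∫ t in (0:ℝ)..1, ‖u t‖ ^ 2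
    have h5 : (1:ℝ)/2 * (1/(2*π)) = 1/(4*π) := by
      rw [div_mul_div_comm, one_mul]
      ring
    have h6 : (1:ℝ)/2 * (1/(2*π) * P) = 1/(4*π) * P := by
      rw [← mul_assoc, h5]
    rw [htsum] at hle
    rw [ge_iff_le]
    linarith [hle, h6]
end

section
/- Let φ : [0,∞) → [0,∞) be C¹ with φ(0) = 0 and t ↦ φ'(t)/t strictly decreasing on (0,∞). Define f(t) = (a/2)φ'(t)t − aφ(t) for a > 0. Then f(0) = 0 and f is strictly decreasing on (0,∞); in particular f(ρ) < 0 for every ρ > 0. -/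
/-!
Fix `u > 0` and put `c = φ'(u)/u`. Since `φ'(s)/s` decreases strictly, `φ'(s) > c s` for
`0 < s < u`, so `φ(s) - c s²/2` increases strictly on `[0, u]`. Comparing its values at `t` and
`u`, and using `φ'(t) t > c t²` together with `φ'(u) u = c u²`, gives `f(u) < f(t)` for `0 < t < u`
and `f(u) < -a φ(0) = 0`.
-/

open Set

section

variable {φ φ' : ℝ → ℝ}

theorem mul_sq_sub_sq_div_two_lt_sub {c t u : ℝ} (htu : t < u)
    (hcont : ContinuousOn φ (Icc t u)) (hderiv : ∀ s ∈ Ioo t u, HasDerivAt φ (φ' s) s)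
    (hlt : ∀ s ∈ Ioo t u, c * s < φ' s) :
    c * (u ^ 2 - t ^ 2) / 2 < φ u - φ t := by
  set g : ℝ → ℝ := fun s => φ s - c * s ^ 2 / 2
  have hg_deriv (s : ℝ) (hs : s ∈ Ioo t u) : HasDerivAt g (φ' s - c * s) s := by
    have hpar : HasDerivAt (fun s : ℝ => c * s ^ 2 / 2) (c * s) s :=
      (((hasDerivAt_pow 2 s).const_mul c).div_const 2).congr_deriv (by ring)
    exact (hderiv s hs).sub hpar
  have hg_mono : StrictMonoOn g (Icc t u) := by
    refine strictMonoOn_of_deriv_pos (convex_Icc t u) ?_ fun s hs => ?_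
    · exact hcont.sub (by fun_prop)
    · rw [interior_Icc] at hs
      rw [(hg_deriv s hs).deriv]
      linarith [hlt s hs]
  have := hg_mono (left_mem_Icc.mpr htu.le) (right_mem_Icc.mpr htu.le) htu
  simp only [g] at this
  linarith

theorem div_mul_lt_of_strictAntiOn_div (hanti : StrictAntiOn (fun t => φ' t / t) (Ioi 0))
    {s u : ℝ} (hs : 0 < s) (hsu : s < u) : φ' u / u * s < φ' s := by
  have := hanti (mem_Ioi.mpr hs) (mem_Ioi.mpr (hs.trans hsu)) hsu
  rwa [lt_div_iff₀ hs] at this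

variable (hcont : ContinuousOn φ (Ici 0)) (hderiv : ∀ t : ℝ, 0 < t → HasDerivAt φ (φ' t) t)
  (hanti : StrictAntiOn (fun t => φ' t / t) (Ioi 0))
include hcont hderiv hanti

theorem deriv_mul_div_two_sub_lt {t u : ℝ} (ht : 0 ≤ t) (htu : t < u) :
    φ' u * u / 2 - φ u < φ' u / u * t ^ 2 / 2 - φ t := by
  have hu : 0 < u := ht.trans_lt htu
  have hincr := mul_sq_sub_sq_div_two_lt_sub (c := φ' u / u) htu
    (hcont.mono fun s hs => ht.trans hs.1) (fun s hs => hderiv s (ht.trans_lt hs.1))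
    (fun s hs => div_mul_lt_of_strictAntiOn_div hanti (ht.trans_lt hs.1) hs.2)
  have hu_eq : φ' u * u = φ' u / u * u ^ 2 := by field_simp
  linarith

theorem strictAntiOn_deriv_mul_div_two_sub :
    StrictAntiOn (fun t => φ' t * t / 2 - φ t) (Ioi 0) := by
  intro t ht u _ htu
  have hkey := deriv_mul_div_two_sub_lt hcont hderiv hanti (le_of_lt ht) htu
  have ht_lt : φ' u / u * t * t < φ' t * t :=
    mul_lt_mul_of_pos_right (div_mul_lt_of_strictAntiOn_div hanti ht htu) ht
  linarith

theorem deriv_mul_div_two_sub_lt_neg {u : ℝ} (hu : 0 < u) :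
    φ' u * u / 2 - φ u < -φ 0 := by
  simpa using deriv_mul_div_two_sub_lt hcont hderiv hanti le_rfl hu

end

/-- Proof of Proposition 2.9: f(t) = (a/2)φ'(t)t - aφ(t) satisfies f(0) = 0, is
strictly decreasing on (0,∞), hence negative there. -/
theorem critical_value_negative (a : ℝ) (ha : 0 < a) (φ φ' : ℝ → ℝ)
    (hφ0 : φ 0 = 0)
    (hcont : ContinuousOn φ (Ici 0))
    (hderiv : ∀ t : ℝ, 0 < t → HasDerivAt φ (φ' t) t)
    (hanti : StrictAntiOn (fun t => φ' t / t) (Ioi 0)) :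
    (a / 2 * φ' 0 * 0 - a * φ 0 = 0) ∧
      StrictAntiOn (fun t => a / 2 * φ' t * t - a * φ t) (Ioi 0) ∧
      ∀ ρ : ℝ, 0 < ρ → a / 2 * φ' ρ * ρ - a * φ ρ < 0 := by
  have hf (t : ℝ) : a / 2 * φ' t * t - a * φ t = a * (φ' t * t / 2 - φ t) := by ring
  refine ⟨by simp [hφ0], fun t ht u hu htu => ?_, fun ρ hρ => ?_⟩
  · simp only [hf]
    exact mul_lt_mul_of_pos_left
      (strictAntiOn_deriv_mul_div_two_sub hcont hderiv hanti ht hu htu) ha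
  · rw [hf]
    have := deriv_mul_div_two_sub_lt_neg hcont hderiv hanti hρ
    rw [hφ0, neg_zero] at this
    exact mul_neg_of_pos_of_neg ha this
end

section
/- Suppose a sequence of indices i(m) ∈ ℤ satisfies |i(m) − m·î| ≤ 2n for all m ∈ ℕ, where î > 2 is a real number and n ∈ ℕ. Then for every fixed K ∈ ℕ, m ∈ {1,...,K}, l ∈ {0,...,2n−2}, and integers h, the cardinality #{ s ∈ ℕ₀ : i(sK + m) + l = h } is at most 4n/(K·î) + 2. -/
open Set

/-- (5.9): the counting estimate. If |i(m) - m·î| ≤ 2n for all m and î > 2,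
then for fixed K, m ≤ K, l ≤ 2n-2 and any integer h, the number of s ∈ ℕ₀ with
i(sK+m) + l = h is at most 4n/(K·î) + 2. -/
theorem index_level_counting (n K : ℕ) (hn : 0 < n) (hK : 0 < K)
    (ihat : ℝ) (hihat : 2 < ihat) (i : ℕ → ℤ)
    (hi : ∀ m : ℕ, 0 < m → |(i m : ℝ) - (m : ℝ) * ihat| ≤ 2 * n)
    (m l : ℕ) (hm1 : 1 ≤ m) (hmK : m ≤ K) (hl : l ≤ 2 * n - 2) (h : ℤ) :
    (({s : ℕ | i (s * K + m) + (l : ℤ) = h}.ncard : ℝ)) ≤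
      4 * n / (K * ihat) + 2 := by
  have hipos : (0:ℝ) < ihat := lt_trans two_pos hihat
  have hKpos : (0:ℝ) < (K:ℝ) := by exact_mod_cast hK
  set D : ℝ := 4 * n / (K * ihat) with hDdef
  have hDnn : 0 ≤ D := by positivity
  set S := {s : ℕ | i (s * K + m) + (l : ℤ) = h} with hSdef
  by_cases hS : S.Nonempty
  · set a := sInf S with ha
    have haS : a ∈ S := Nat.sInf_mem hS
    have key : ∀ s ∈ S, s ≤ a + ⌊D⌋₊ := by
      intro s hsS
      have hle : a ≤ s := Nat.sInf_le hsS
      have h1 : |(i (s * K + m) : ℝ) - ((s * K + m : ℕ) : ℝ) * ihat| ≤ 2 * n :=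
        hi _ (by positivity)
      have h2 : |(i (a * K + m) : ℝ) - ((a * K + m : ℕ) : ℝ) * ihat| ≤ 2 * n :=
        hi _ (by positivity)
      have heq : i (s * K + m) = i (a * K + m) := by
        have := hsS; have := haS
        simp only [hSdef, Set.mem_setOf_eq] at *
        omega
      have hdiff : ((s * K + m : ℕ) : ℝ) * ihat - ((a * K + m : ℕ) : ℝ) * ihat ≤ 4 * n := by
        rw [heq] at h1
        have := abs_le.mp h1
        have := abs_le.mp h2
        linarith [this.1, this.2]
      have hcast : ((s * K + m : ℕ) : ℝ) - ((a * K + m : ℕ) : ℝ) = ((s - a : ℕ) : ℝ) * K := by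
        push_cast [Nat.cast_sub hle]
        ring
      have hled : ((s - a : ℕ) : ℝ) ≤ D := by
        rw [hDdef, le_div_iff₀ (by positivity)]
        nlinarith [hdiff, hcast]
      have : s - a ≤ ⌊D⌋₊ := Nat.le_floor hled
      omega
    have hsub : S ⊆ ↑(Finset.Icc a (a + ⌊D⌋₊)) := by
      intro s hsS
      simp only [Finset.coe_Icc, Set.mem_Icc]
      exact ⟨Nat.sInf_le hsS, key s hsS⟩
    have hcard : S.ncard ≤ ⌊D⌋₊ + 1 := by
      calc S.ncard ≤ (↑(Finset.Icc a (a + ⌊D⌋₊)) : Set ℕ).ncard :=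
            Set.ncard_le_ncard hsub (Set.finite_coe_iff.mp (by infer_instance))
        _ = (Finset.Icc a (a + ⌊D⌋₊)).card := Set.ncard_coe_finset _
        _ = ⌊D⌋₊ + 1 := by rw [Nat.card_Icc]; omega
    have : (S.ncard : ℝ) ≤ (⌊D⌋₊ : ℝ) + 1 := by exact_mod_cast hcard
    have hfl : (⌊D⌋₊ : ℝ) ≤ D := Nat.floor_le hDnn
    linarith
  · rw [Set.not_nonempty_iff_eq_empty] at hS
    rw [hS]
    simp
    linarith
end

section
/- Suppose i : ℕ → ℤ satisfies |i(m) − m·î| ≤ 2n for all m, with î > 2. Fix K ∈ ℕ, m ∈ {1,...,K}, l ∈ {0,...,2n−2}, and let N(I) = #{ s ∈ ℕ₀ : i(sK+m) + l ≤ I }. Then (I − l − 2n)/(K·î) − 2 ≤ N(I) ≤ (I − l + 2n)/(K·î) + 1 for all I ∈ ℕ; consequently N(I)/I → 1/(K·î) as I → ∞. -/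
open Set Filter

/-- The asymptotic counting lemma behind Claim 2 in the proof of Theorem 1.2:
with N(I) = #{s ∈ ℕ₀ : i(sK+m) + l ≤ I}, one has
(I-l-2n)/(K·î) - 2 ≤ N(I) ≤ (I-l+2n)/(K·î) + 1, hence N(I)/I → 1/(K·î). -/
theorem index_counting_asymptotics (n K : ℕ) (hn : 0 < n) (hK : 0 < K)
    (ihat : ℝ) (hihat : 2 < ihat) (i : ℕ → ℤ)
    (hi : ∀ m : ℕ, 0 < m → |(i m : ℝ) - (m : ℝ) * ihat| ≤ 2 * n)
    (m l : ℕ) (hm1 : 1 ≤ m) (hmK : m ≤ K) (hl : l ≤ 2 * n - 2) :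
    (∀ I : ℕ,
      ((I : ℝ) - l - 2 * n) / (K * ihat) - 2 ≤
        (({s : ℕ | i (s * K + m) + (l : ℤ) ≤ (I : ℤ)}.ncard : ℝ)) ∧
      (({s : ℕ | i (s * K + m) + (l : ℤ) ≤ (I : ℤ)}.ncard : ℝ)) ≤
        ((I : ℝ) - l + 2 * n) / (K * ihat) + 1) ∧
    Tendsto (fun I : ℕ =>
        (({s : ℕ | i (s * K + m) + (l : ℤ) ≤ (I : ℤ)}.ncard : ℝ)) / I)
      atTop (nhds (1 / (K * ihat))) := by
  have hK0 : (0:ℝ) < K := by exact_mod_cast hK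
  have hih0 : (0:ℝ) < ihat := by linarith
  have hd : (0:ℝ) < K * ihat := mul_pos hK0 hih0
  have hmK' : (m:ℝ) ≤ K := by exact_mod_cast hmK
  have hm0 : (0:ℝ) < m := by exact_mod_cast hm1
  have hmdivK : (m:ℝ) / K ≤ 1 := (div_le_one hK0).mpr hmK'
  have hlnN : l + 2 ≤ 2 * n := by omega
  have hln : (l:ℝ) + 2 ≤ 2 * n := by exact_mod_cast hlnN
  have hIic : ∀ M : ℕ, (Set.Iic M).ncard = M + 1 := by
    intro M
    rw [← Finset.coe_Iic, Set.ncard_coe_finset, Nat.card_Iic]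
  -- the main per-I bounds
  have main : ∀ I : ℕ,
      ((I : ℝ) - l - 2 * n) / (K * ihat) - 2 ≤
        (({s : ℕ | i (s * K + m) + (l : ℤ) ≤ (I : ℤ)}.ncard : ℝ)) ∧
      (({s : ℕ | i (s * K + m) + (l : ℤ) ≤ (I : ℤ)}.ncard : ℝ)) ≤
        ((I : ℝ) - l + 2 * n) / (K * ihat) + 1 := by
    intro I
    set S : Set ℕ := {s : ℕ | i (s * K + m) + (l : ℤ) ≤ (I : ℤ)} with hS
    -- estimate on i at relevant points
    have hest : ∀ s : ℕ,
        ((s:ℝ) * K + m) * ihat - 2 * n ≤ (i (s * K + m) : ℝ) ∧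
        (i (s * K + m) : ℝ) ≤ ((s:ℝ) * K + m) * ihat + 2 * n := by
      intro s
      have hpos : 0 < s * K + m := by positivity
      have := abs_le.mp (hi (s * K + m) hpos)
      push_cast at this
      constructor <;> linarith [this.1, this.2]
    have hr0 : 0 < ((I : ℝ) - l + 2 * n) / (K * ihat) := by
      apply div_pos _ hd
      have : (0:ℝ) ≤ I := Nat.cast_nonneg I
      linarith
    set r := ((I : ℝ) - l + 2 * n) / (K * ihat) with hrdef
    have hsub : S ⊆ Set.Iic ⌊r⌋₊ := by
      intro s hs
      have hs' : (i (s * K + m) : ℝ) + l ≤ I := by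
        have : ((i (s * K + m) + (l:ℤ) : ℤ) : ℝ) ≤ ((I:ℤ) : ℝ) := by
          exact_mod_cast hs
        push_cast at this; linarith
      have h1 := (hest s).1
      have h2 : (s:ℝ) * (K * ihat) ≤ (I:ℝ) - l + 2 * n := by
        nlinarith [mul_pos hm0 hih0]
      have h3 : (s:ℝ) ≤ r := (le_div_iff₀ hd).mpr h2
      exact Nat.le_floor h3
    have hfin : S.Finite := (Set.finite_Iic _).subset hsub
    have hcard_ub : (S.ncard : ℝ) ≤ r + 1 := by
      have h1 : S.ncard ≤ ⌊r⌋₊ + 1 := by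
        have := Set.ncard_le_ncard hsub (Set.finite_Iic _)
        rwa [hIic] at this
      have h2 : (⌊r⌋₊ : ℝ) ≤ r := Nat.floor_le (le_of_lt hr0)
      have : (S.ncard : ℝ) ≤ (⌊r⌋₊ : ℝ) + 1 := by exact_mod_cast h1
      linarith
    -- lower bound
    set B := ((I:ℝ) - l - 2 * n - m * ihat) / (K * ihat) with hBdef
    have hkey : ((I:ℝ) - l - 2 * n) / (K * ihat) = B + (m:ℝ) / K := by
      rw [hBdef]
      field_simp
      ring
    have hlb : ((I : ℝ) - l - 2 * n) / (K * ihat) - 2 ≤ (S.ncard : ℝ) := by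
      rcases lt_or_ge B 0 with hB | hB
      · have : (0:ℝ) ≤ (S.ncard : ℝ) := Nat.cast_nonneg _
        rw [hkey]; linarith
      · have hsub' : Set.Iic ⌊B⌋₊ ⊆ S := by
          intro s hs
          have hs1 : (s:ℝ) ≤ B := by
            have : (s:ℝ) ≤ (⌊B⌋₊ : ℝ) := by exact_mod_cast hs
            linarith [Nat.floor_le hB]
          have hs2 : (s:ℝ) * (K * ihat) ≤ (I:ℝ) - l - 2 * n - m * ihat :=
            (le_div_iff₀ hd).mp hs1
          have h2 := (hest s).2
          have : (i (s * K + m) : ℝ) + l ≤ I := by nlinarith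
          show i (s * K + m) + (l:ℤ) ≤ (I:ℤ)
          have := (by exact_mod_cast this :
            ((i (s * K + m) + (l:ℤ) : ℤ) : ℝ) ≤ ((I:ℤ) : ℝ))
          exact_mod_cast this
        have h1 : ⌊B⌋₊ + 1 ≤ S.ncard := by
          have := Set.ncard_le_ncard hsub' hfin
          rwa [hIic] at this
        have h1' : ((⌊B⌋₊:ℝ) + 1) ≤ (S.ncard : ℝ) := by exact_mod_cast h1
        have h2 : B - 1 < (⌊B⌋₊ : ℝ) := Nat.sub_one_lt_floor B
        rw [hkey]; linarith
    exact ⟨hlb, hcard_ub⟩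
  refine ⟨main, ?_⟩
  -- squeeze
  have t0 : Tendsto (fun I : ℕ => ((I:ℝ))⁻¹) atTop (nhds 0) :=
    tendsto_inv_atTop_zero.comp tendsto_natCast_atTop_atTop
  have hle : ∀ᶠ I : ℕ in atTop, True := by simp
  have tlow : Tendsto (fun I : ℕ => (((I : ℝ) - l - 2 * n) / (K * ihat) - 2) / I)
      atTop (nhds (1 / (K * ihat))) := by
    have h1 : Tendsto (fun I : ℕ =>
        (1 - ((l:ℝ) + 2 * n) * (I:ℝ)⁻¹) / (K * ihat) - 2 * (I:ℝ)⁻¹)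
        atTop (nhds ((1 - ((l:ℝ) + 2 * n) * 0) / (K * ihat) - 2 * 0)) :=
      ((tendsto_const_nhds.sub (t0.const_mul _)).div_const _).sub (t0.const_mul 2)
    simp only [mul_zero, sub_zero] at h1
    apply h1.congr'
    filter_upwards [eventually_ge_atTop 1] with I hI
    have hI0 : (0:ℝ) < I := by exact_mod_cast hI
    field_simp
    ring
  have thigh : Tendsto (fun I : ℕ => (((I : ℝ) - l + 2 * n) / (K * ihat) + 1) / I)
      atTop (nhds (1 / (K * ihat))) := by
    have h1 : Tendsto (fun I : ℕ =>
        (1 - ((l:ℝ) - 2 * n) * (I:ℝ)⁻¹) / (K * ihat) + (I:ℝ)⁻¹)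
        atTop (nhds ((1 - ((l:ℝ) - 2 * n) * 0) / (K * ihat) + 0)) :=
      ((tendsto_const_nhds.sub (t0.const_mul _)).div_const _).add t0
    simp only [mul_zero, sub_zero, add_zero] at h1
    apply h1.congr'
    filter_upwards [eventually_ge_atTop 1] with I hI
    have hI0 : (0:ℝ) < I := by exact_mod_cast hI
    field_simp
    ring
  apply tendsto_of_tendsto_of_tendsto_of_le_of_le' tlow thigh
  · filter_upwards [eventually_ge_atTop 1] with I hI
    have hI0 : (0:ℝ) ≤ (I:ℝ) := Nat.cast_nonneg I
    exact div_le_div_of_nonneg_right (main I).1 hI0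
  · filter_upwards [eventually_ge_atTop 1] with I hI
    have hI0 : (0:ℝ) ≤ (I:ℝ) := Nat.cast_nonneg I
    exact div_le_div_of_nonneg_right (main I).2 hI0
end
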